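/- arXiv:2103.12153 — 2 statements merged into one kernel-verified Lean document; each statement's English description precedes it below -/
import Mathlib

section
/- Let n and ℓ be positive integers with n ≥ 2ℓ+1 ≥ 3. If G is an n-vertex spider, then G contains at most ℓ+3 paths having exactly n−ℓ vertices, with the single exception ℓ = 2 and G isomorphic to the spider S_{1,1,1,1} (the star K_{1,4}). -/
open SimpleGraph

/-- The eccentricity (`ℕ∞`-valued) of a vertex: supremum of extended distances to
all vertices.  It is infinite if the graph is disconnected. -/
noncomputable def eccent {V : Type*} (G : SimpleGraph V) (v : V) : ℕ∞ :=
  ⨆ w, G.edist v w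

/-- The radius (`ℕ∞`-valued) of a graph: minimum eccentricity. -/
noncomputable def gradius {V : Type*} (G : SimpleGraph V) : ℕ∞ :=
  ⨅ v, _root_.eccent G v

/-- The diameter (`ℕ∞`-valued) of a graph: maximum distance between two vertices. -/
noncomputable def gdiam {V : Type*} (G : SimpleGraph V) : ℕ∞ :=
  ⨆ v, ⨆ w, G.edist v w

/-- Two graphs on `Fin n` have the same `k`-deck: there is a bijection `φ` between the
`k`-element vertex subsets such that for each subset `s` the subgraph induced by `s` in the
first graph is isomorphic to the subgraph induced by `φ s` in the second. -/
def SameDeck {n : ℕ} (G H : SimpleGraph (Fin n)) (k : ℕ) : Prop :=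
  ∃ φ : {s : Finset (Fin n) // s.card = k} ≃ {s : Finset (Fin n) // s.card = k},
    ∀ s : {s : Finset (Fin n) // s.card = k},
      Nonempty ((SimpleGraph.induce (↑s.1 : Set (Fin n)) G) ≃g
                (SimpleGraph.induce (↑(φ s).1 : Set (Fin n)) H))

/-- The degree of a vertex. -/
noncomputable def ndeg {V : Type*} (G : SimpleGraph V) (v : V) : ℕ :=
  Nat.card {w : V // G.Adj v w}

/-!
Root the tree at its branch vertex `c` (any vertex if it is a path) and put
`D = n - ℓ - 1 ≥ ℓ`. Away from `c` all degrees are at most two, so a vertex is determined by its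
leg and its depth, and the spider is described by its leg lengths `a₁ ≥ a₂ ≥ ⋯`, which sum to
`n - 1 = D + ℓ`. Two vertices at distance `D` either lie on a common ray from `c`, and then the
deeper one has depth at least `D` and determines the other, or lie on distinct legs `i, j` at
depths `x + y = D`. This gives at most `∑ (aᵢ + 1 - D)⁺ + ∑_{i<j} #{x + y = D}` pairs.

If `a₁ ≥ D`, the other legs hold at most `ℓ` vertices and the count is at most `ℓ + 3`.
Otherwise only heavy pairs of legs (`aᵢ + aⱼ ≥ D`) contribute, `aᵢ + aⱼ + 1 - D` each. If all
heavy pairs meet `{1, 2}`, the stars of heavy pairs at legs `1` and `2` give at most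
`2ℓ + 3 - D ≤ ℓ + 3`. Two disjoint heavy pairs use up all `D + ℓ ≤ 2D` vertices, which forces
four legs of length `D / 2 = ℓ / 2` and `6` pairs: too many exactly for `K_{1,4}` with `ℓ = 2`.
-/

namespace Spider

open Finset

section LegCounts

/-- Pairs at distance `D` on the path formed by a leg of length `a` and the centre. -/
def alignedPairs (D a : ℕ) : ℕ := a + 1 - D

def crossPairs (D a b : ℕ) : ℕ := min a (D - 1) + min b (D - 1) + 1 - D

lemma card_filter_add_eq_crossPairs {D : ℕ} (hD : 1 ≤ D) (a b : ℕ) :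
    #{q ∈ Icc 1 a ×ˢ Icc 1 b | q.1 + q.2 = D} = crossPairs D a b := by
  have h : crossPairs D a b = #(Icc (D - min b (D - 1)) (min a (D - 1))) := by
    rw [Nat.card_Icc, crossPairs]; omega
  rw [h]
  refine card_bij (fun q _ => q.1) ?_ ?_ ?_
  · intro q hq
    simp only [mem_filter, mem_product, mem_Icc] at hq ⊢
    omega
  · intro q hq r hr h
    simp only [mem_filter] at hq hr
    exact Prod.ext h (by omega)
  · intro k hk
    refine ⟨(k, D - k), ?_, rfl⟩
    simp only [mem_filter, mem_product, mem_Icc] at hk ⊢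
    omega

lemma crossPairs_comm (D a b : ℕ) : crossPairs D a b = crossPairs D b a := by
  unfold crossPairs; omega

lemma crossPairs_le_right {D : ℕ} (hD : 1 ≤ D) (a b : ℕ) : crossPairs D a b ≤ b := by
  unfold crossPairs; omega

lemma crossPairs_le (D a b : ℕ) : crossPairs D a b ≤ a + b + 1 - D := by
  unfold crossPairs; omega

lemma crossPairs_of_lt {D a b : ℕ} (ha : a < D) (hb : b < D) :
    crossPairs D a b = a + b + 1 - D := by
  unfold crossPairs; omega

def crossSum (D : ℕ) (l : List ℕ) : ℕ := (l.offDiag.map fun p => crossPairs D p.1 p.2).sum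

/-- Ordered pairs of vertices at distance `D` in the spider with leg lengths `l`; counting
ordered pairs avoids halving the sum over pairs of distinct legs. -/
def pairCount (D : ℕ) (l : List ℕ) : ℕ := 2 * (l.map (alignedPairs D)).sum + crossSum D l

@[simp]
lemma crossSum_nil (D : ℕ) : crossSum D [] = 0 := rfl

lemma crossSum_cons (D a : ℕ) (l : List ℕ) :
    crossSum D (a :: l) = 2 * (l.map (crossPairs D a)).sum + crossSum D l := by
  rw [crossSum, ((List.offDiag_cons_perm a l).map _).sum_eq]
  simp only [List.map_append, List.sum_append, List.map_map, Function.comp_def, crossSum,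
    crossPairs_comm D _ a]
  ring

@[simp]
lemma crossSum_singleton (D a : ℕ) : crossSum D [a] = 0 := by
  simp [crossSum_cons]

lemma sum_offDiag_eq_crossSum {α : Type*} (D : ℕ) (s : Finset α) (m : α → ℕ) {l : List ℕ}
    (hl : (l : Multiset ℕ) = s.val.map m) :
    ∑ x ∈ s.offDiag, crossPairs D (m x.1) (m x.2) = crossSum D l := by
  have hval : s.offDiag.val = (s.toList.offDiag : Multiset (α × α)) := by
    change Quotient.map List.offDiag (fun _ _ => List.Perm.offDiag) s.1 = _
    rw [← coe_toList s]
    rfl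
  have hperm : l.Perm (s.toList.map m) := by
    rw [← Multiset.coe_eq_coe, hl, ← Multiset.map_coe, coe_toList]
  rw [sum_eq_multiset_sum, hval, Multiset.map_coe, Multiset.sum_coe, crossSum,
    (hperm.offDiag.map _).sum_eq, ← List.map_prodMap_offDiag, List.map_map]
  rfl

lemma crossSum_eq_zero {D : ℕ} {l : List ℕ} (h : l.Pairwise fun x y => x + y < D) :
    crossSum D l = 0 := by
  induction l with
  | nil => rfl
  | cons a t ih =>
    rw [List.pairwise_cons] at h
    rw [crossSum_cons, ih h.2, List.sum_eq_zero fun x hx => ?_]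
    · rfl
    obtain ⟨y, hy, rfl⟩ := List.mem_map.mp hx
    have := crossPairs_le D a y
    have := h.1 y hy
    omega

lemma crossSum_eq_zero_of_antitone {D a b : ℕ} {l : List ℕ}
    (hl : (a :: b :: l).Pairwise (· ≥ ·)) (hab : a + b < D) : crossSum D (a :: b :: l) = 0 := by
  apply crossSum_eq_zero
  have hb : ∀ y ∈ b :: l, y ≤ b := by
    intro y hy
    rcases List.mem_cons.mp hy with rfl | hy
    · rfl
    · exact List.rel_of_pairwise_cons (List.pairwise_cons.mp hl).2 hy
  have ha : b ≤ a := List.rel_of_pairwise_cons hl (List.mem_cons_self ..)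
  refine List.pairwise_cons.mpr ⟨fun y hy => by have := hb y hy; omega, ?_⟩
  exact (List.pairwise_cons.mp hl).2.imp_of_mem fun hx hy _ => by
    have := hb _ hx; have := hb _ hy; omega

lemma sum_crossPairs_le_sum {D : ℕ} (hD : 1 ≤ D) (a : ℕ) (t : List ℕ) :
    (t.map (crossPairs D a)).sum ≤ t.sum := by
  simpa using List.sum_le_sum (g := id) fun x _ => crossPairs_le_right hD a x

/-- Only the legs `x` with `D ≤ a + x` meet the leg `a` at distance `D`. -/
lemma sum_crossPairs_le {D a : ℕ} {t : List ℕ} (ha : a < D) (ht : ∀ x ∈ t, x < D) :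
    (t.map (crossPairs D a)).sum ≤ t.sum + a + 1 - D := by
  induction t with
  | nil => simp
  | cons x r ih =>
    have hx := ht x (List.mem_cons_self ..)
    have hr := sum_crossPairs_le_sum (by omega : 1 ≤ D) a r
    have ih := ih fun y hy => ht y (List.mem_cons_of_mem _ hy)
    rw [List.map_cons, List.sum_cons, List.sum_cons, crossPairs_of_lt ha hx]
    omega

lemma sum_alignedPairs_le_one {D : ℕ} {t : List ℕ} (hpos : ∀ x ∈ t, 1 ≤ x) (hsum : t.sum ≤ D) :
    (t.map (alignedPairs D)).sum ≤ 1 := by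
  induction t with
  | nil => simp
  | cons x r ih =>
    rw [List.sum_cons] at hsum
    rw [List.map_cons, List.sum_cons, alignedPairs]
    rcases r with _ | ⟨y, r⟩
    · rw [List.map_nil, List.sum_nil]
      omega
    · have hy := hpos y (by simp)
      rw [List.sum_cons] at hsum
      have := ih (fun z hz => hpos z (List.mem_cons_of_mem _ hz)) (by rw [List.sum_cons]; omega)
      omega

lemma crossSum_le_two {D : ℕ} {t : List ℕ} (hpos : ∀ x ∈ t, 1 ≤ x)
    (ht : t.Pairwise (· ≥ ·)) (hsum : t.sum ≤ D) : crossSum D t ≤ 2 := by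
  match t with
  | [] | [_] => simp
  | [a, b] =>
    have := crossPairs_le D a b
    rw [List.sum_pair] at hsum
    rw [crossSum_cons, crossSum_singleton, List.map_singleton, List.sum_singleton]
    omega
  | a :: b :: c :: r =>
    have hc := hpos c (by simp)
    simp only [List.sum_cons] at hsum
    rw [crossSum_eq_zero_of_antitone ht (by omega)]
    omega

lemma pairCount_cons_le_of_sum_le {D ℓ a : ℕ} {t : List ℕ} (hD : ℓ ≤ D) (hℓ : 1 ≤ ℓ)
    (hpos : ∀ x ∈ a :: t, 1 ≤ x) (hl : (a :: t).Pairwise (· ≥ ·)) (hsum : a + t.sum ≤ D + ℓ)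
    (ht : t.sum ≤ ℓ) : pairCount D (a :: t) ≤ 2 * (ℓ + 3) := by
  have htpos : ∀ x ∈ t, 1 ≤ x := fun x hx => hpos x (List.mem_cons_of_mem _ hx)
  have h1 := sum_alignedPairs_le_one (D := D) htpos (by omega)
  have h2 := sum_crossPairs_le_sum (by omega : 1 ≤ D) a t
  have h3 := crossSum_le_two htpos (List.pairwise_cons.mp hl).2 (by omega : t.sum ≤ D)
  rw [pairCount, crossSum_cons, List.map_cons, List.sum_cons, alignedPairs]
  omega

lemma crossSum_cons_le {D ℓ a : ℕ} {t : List ℕ} (ha : a < D) (ht : ∀ x ∈ t, x < D)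
    (h0 : crossSum D t = 0) (hsum : a + t.sum ≤ D + ℓ) : crossSum D (a :: t) ≤ 2 * (ℓ + 1) := by
  have := sum_crossPairs_le ha ht
  rw [crossSum_cons, h0]
  omega

lemma crossSum_cons_cons_le {D ℓ a b c : ℕ} {r : List ℕ} (hℓ : ℓ ≤ D) (ha : a < D)
    (hba : b ≤ a) (hr : ∀ x ∈ c :: r, x ≤ b) (hbc : D ≤ b + c) (h0 : crossSum D (c :: r) = 0)
    (hsum : a + b + (c :: r).sum ≤ D + ℓ) : crossSum D (a :: b :: c :: r) ≤ 2 * (ℓ + 3) := by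
  have hlt : ∀ x ∈ c :: r, x < D := fun x hx => by have := hr x hx; omega
  have hab := crossPairs_of_lt ha (by omega : b < D)
  have hsa := sum_crossPairs_le ha hlt
  have hsb := sum_crossPairs_le (by omega : b < D) hlt
  have hc : c ≤ (c :: r).sum := by simp
  have hcb := hr c (List.mem_cons_self ..)
  rw [crossSum_cons, crossSum_cons (l := c :: r), h0, List.map_cons, List.sum_cons]
  omega

lemma crossSum_le_of_disjoint_heavy {D ℓ a b c d : ℕ} {r : List ℕ} (hℓ : ℓ ≤ D)
    (hpos : ∀ x ∈ d :: r, 1 ≤ x) (hl : (a :: b :: c :: d :: r).Pairwise (· ≥ ·)) (ha : a < D)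
    (hbc : D ≤ b + c) (hcd : D ≤ c + d) (hsum : (a :: b :: c :: d :: r).sum ≤ D + ℓ)
    (hexc : ¬(ℓ = 2 ∧ a :: b :: c :: d :: r = [1, 1, 1, 1])) :
    crossSum D (a :: b :: c :: d :: r) ≤ 2 * (ℓ + 3) := by
  simp only [List.pairwise_cons, List.mem_cons] at hl
  have hba := hl.1 b (by simp)
  have hcb := hl.2.1 c (by simp)
  have hdc := hl.2.2.1 d (by simp)
  have hd := hpos d (by simp)
  simp only [List.sum_cons] at hsum
  have hnil : r = [] := by
    rcases r with _ | ⟨e, r⟩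
    · rfl
    · have := hpos e (by simp)
      simp only [List.sum_cons] at hsum
      omega
  subst hnil
  rw [List.sum_nil, add_zero] at hsum
  obtain ⟨rfl, rfl, rfl⟩ : a = b ∧ b = c ∧ c = d := by omega
  have h1 : crossPairs D a a = 1 := by
    rw [crossPairs_of_lt ha ha]
    omega
  simp only [crossSum_cons, List.map_cons, List.map_nil, List.sum_cons, List.sum_nil, h1,
    crossSum_nil]
  by_contra h
  obtain rfl : a = 1 := by omega
  exact hexc ⟨by omega, rfl⟩

lemma crossSum_le_of_forall_lt {D ℓ : ℕ} (hℓ : ℓ ≤ D) {l : List ℕ} (hpos : ∀ x ∈ l, 1 ≤ x)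
    (hl : l.Pairwise (· ≥ ·)) (hlt : ∀ x ∈ l, x < D) (hsum : l.sum ≤ D + ℓ)
    (hexc : ¬(ℓ = 2 ∧ l = [1, 1, 1, 1])) : crossSum D l ≤ 2 * (ℓ + 3) := by
  match l with
  | [] | [_] => simp
  | a :: b :: t =>
    have ha := hlt a (by simp)
    have hba : b ≤ a := List.rel_of_pairwise_cons hl (by simp)
    have htail := (List.pairwise_cons.mp hl).2
    have hsum' : a + (b :: t).sum ≤ D + ℓ := by simpa using hsum
    have hlt' : ∀ x ∈ b :: t, x < D := fun x hx => hlt x (List.mem_cons_of_mem _ hx)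
    have light : crossSum D (b :: t) = 0 → crossSum D (a :: b :: t) ≤ 2 * (ℓ + 3) :=
      fun h0 => (crossSum_cons_le ha hlt' h0 hsum').trans (by omega)
    match t with
    | [] => exact light (crossSum_singleton D b)
    | c :: r =>
      by_cases hbc : b + c < D
      · exact light (crossSum_eq_zero_of_antitone htail hbc)
      have hr : ∀ x ∈ c :: r, x ≤ b := fun x hx => List.rel_of_pairwise_cons htail hx
      replace hsum' : a + b + (c :: r).sum ≤ D + ℓ := by simpa [add_assoc] using hsum
      match r with
      | [] => exact crossSum_cons_cons_le hℓ ha hba hr (by omega) (crossSum_singleton D c) hsum'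
      | d :: r =>
        by_cases hcd : c + d < D
        · exact crossSum_cons_cons_le hℓ ha hba hr (by omega)
            (crossSum_eq_zero_of_antitone (List.pairwise_cons.mp htail).2 hcd) hsum'
        exact crossSum_le_of_disjoint_heavy hℓ (fun x hx => hpos x (by simp_all)) hl ha
          (by omega) (by omega) hsum hexc

theorem pairCount_le {D ℓ : ℕ} (hℓ : 1 ≤ ℓ) (hD : ℓ ≤ D) {l : List ℕ} (hpos : ∀ x ∈ l, 1 ≤ x)
    (hl : l.Pairwise (· ≥ ·)) (hsum : l.sum ≤ D + ℓ) (hexc : ¬(ℓ = 2 ∧ l = [1, 1, 1, 1])) :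
    pairCount D l ≤ 2 * (ℓ + 3) := by
  rcases l with _ | ⟨a, t⟩
  · simp [pairCount]
  rw [List.sum_cons] at hsum
  by_cases ht : t.sum ≤ ℓ
  · exact pairCount_cons_le_of_sum_le hD hℓ hpos hl hsum ht
  have hlt : ∀ x ∈ a :: t, x < D := by
    intro x hx
    have : x ≤ a := by
      rcases List.mem_cons.mp hx with rfl | hx
      · rfl
      · exact List.rel_of_pairwise_cons hl hx
    omega
  have hW : ((a :: t).map (alignedPairs D)).sum = 0 :=
    List.sum_eq_zero fun y hy => by
      obtain ⟨x, hx, rfl⟩ := List.mem_map.mp hy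
      have := hlt x hx
      rw [alignedPairs]; omega
  rw [pairCount, hW]
  simpa using crossSum_le_of_forall_lt hD hpos hl hlt (by simpa using hsum) hexc

end LegCounts

lemma two_mul_card_filter_lt_le {α : Type*} [Fintype α] [LinearOrder α] (r : α → α → Prop)
    [DecidableRel r] (hr : ∀ a b, r a b → r b a) :
    2 * #{p : α × α | p.1 < p.2 ∧ r p.1 p.2} ≤ #{p : α × α | r p.1 p.2} := by
  have hswap : #{p : α × α | p.1 < p.2 ∧ r p.1 p.2} = #{p : α × α | p.2 < p.1 ∧ r p.1 p.2} :=
    card_equiv (Equiv.prodComm α α) fun p => by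
      simpa using fun _ => ⟨hr _ _, hr _ _⟩
  rw [two_mul]
  nth_rewrite 2 [hswap]
  rw [← card_union_of_disjoint (disjoint_filter.mpr fun p _ h h' => lt_asymm h.1 h'.1)]
  exact card_le_card fun p hp => by
    simp only [mem_union, mem_filter, mem_univ, true_and] at hp ⊢
    tauto

section RootedTree

variable {V : Type*} {G : SimpleGraph V} {c u v w : V}

lemma nonempty_starGraph_iso [Fintype V] [DecidableEq V] (r : V) {k : ℕ}
    (hk : Fintype.card V = k + 1) :
    Nonempty (starGraph r ≃g completeBipartiteGraph (Fin 1) (Fin k)) := by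
  have e₁ : {v // ¬v = r} ≃ Fin k := Fintype.equivFinOfCardEq <| by
    rw [Fintype.card_subtype_compl, Fintype.card_subtype_eq]; omega
  let e : V ≃ Fin 1 ⊕ Fin k := (Equiv.sumCompl (· = r)).symm.trans
    (Equiv.sumCongr (Fintype.equivFinOfCardEq (Fintype.card_subtype_eq r)) e₁)
  refine ⟨⟨e, fun {u v} => ?_⟩⟩
  by_cases hu : u = r <;> by_cases hv : v = r <;>
    simp [e, hu, hv, Equiv.sumCompl_symm_apply_of_pos, Equiv.sumCompl_symm_apply_of_neg,
      starGraph_adj, eq_comm (a := r)]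

lemma eq_starGraph_of_forall_adj (hT : G.IsTree) (h : ∀ v, v ≠ c → G.Adj c v) :
    G = starGraph c := by
  ext u v
  rw [starGraph_adj]
  refine ⟨fun huv => ⟨huv.ne, ?_⟩, ?_⟩
  · by_contra! hne
    exact hT.dist_ne_of_adj c huv ((dist_eq_one_iff_adj.mpr (h u hne.1)).trans
      (dist_eq_one_iff_adj.mpr (h v hne.2)).symm)
  · rintro ⟨hne, rfl | rfl⟩
    · exact h v hne.symm
    · exact (h u hne).symm

lemma exists_forall_ndeg_lt [Nonempty V]
    (h : ∀ u v : V, 3 ≤ ndeg G u → 3 ≤ ndeg G v → u = v) : ∃ c, ∀ w, w ≠ c → ndeg G w < 3 := by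
  by_cases hv : ∃ v, 3 ≤ ndeg G v
  · obtain ⟨v, hv⟩ := hv
    exact ⟨v, fun w hw => lt_of_not_ge fun hw3 => hw (h w v hw3 hv)⟩
  · push Not at hv
    exact ⟨Classical.arbitrary V, fun w _ => hv w⟩

lemma three_le_ndeg [Finite V] {x y z : V} (hx : G.Adj w x) (hy : G.Adj w y) (hz : G.Adj w z)
    (hxy : x ≠ y) (hxz : x ≠ z) (hyz : y ≠ z) : 3 ≤ ndeg G w :=
  calc 3 = ({x, y, z} : Set V).ncard := (Set.ncard_eq_three.mpr ⟨x, y, z, hxy, hxz, hyz, rfl⟩).symm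
    _ ≤ (G.neighborSet w).ncard := by
      refine Set.ncard_le_ncard ?_ (Set.toFinite _)
      rintro _ (rfl | rfl | rfl) <;> assumption
    _ = ndeg G w := rfl

lemma dist_le_of_mem_support (p : G.Walk u v) (hw : w ∈ p.support) : G.dist u w ≤ p.length := by
  classical
  exact (dist_le (p.takeUntil w hw)).trans (p.length_takeUntil_le_length hw)

lemma exists_adj_dist_add_one (hG : G.Connected) (hv : v ≠ c) :
    ∃ w, G.Adj w v ∧ G.dist c w + 1 = G.dist c v := by
  obtain ⟨p, hp⟩ := hG.exists_walk_length_eq_dist v c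
  cases p with
  | nil => exact absurd rfl hv
  | @cons _ w _ hadj q =>
    refine ⟨w, hadj.symm, le_antisymm ?_ ?_⟩
    · have := dist_le q.reverse
      rw [Walk.length_reverse] at this
      rw [dist_comm (u := c) (v := v), ← hp, Walk.length_cons]
      omega
    · have := hG.dist_triangle (u := c) (w := v) (v := w)
      rw [dist_eq_one_iff_adj.mpr hadj.symm] at this
      exact this

open Classical in
/-- A neighbour of `v` one step closer to `c` (junk value `c` when there is none). -/
noncomputable def parent (G : SimpleGraph V) (c v : V) : V :=
  if h : ∃ w, G.Adj w v ∧ G.dist c w + 1 = G.dist c v then h.choose else c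

lemma parent_spec (hG : G.Connected) (hv : v ≠ c) :
    G.Adj (parent G c v) v ∧ G.dist c (parent G c v) + 1 = G.dist c v := by
  have h := exists_adj_dist_add_one hG hv
  rw [parent, dif_pos h]
  exact h.choose_spec

lemma dist_iterate_parent (hG : G.Connected) {j : ℕ} (hj : j ≤ G.dist c v) :
    G.dist c ((parent G c)^[j] v) + j = G.dist c v := by
  induction j with
  | zero => rfl
  | succ j ih =>
    have ih := ih (by omega)
    have hne : (parent G c)^[j] v ≠ c := by
      rintro h
      rw [h, SimpleGraph.dist_self] at ih
      omega
    rw [Function.iterate_succ_apply']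
    have := (parent_spec hG hne).2
    omega

lemma iterate_parent_dist (hG : G.Connected) : (parent G c)^[G.dist c v] v = c := by
  have := dist_iterate_parent hG (le_refl (G.dist c v))
  exact (hG.dist_eq_zero_iff.mp (by omega)).symm

lemma dist_iterate_parent_self_le (hG : G.Connected) :
    ∀ {j : ℕ}, j ≤ G.dist c v → G.dist ((parent G c)^[j] v) v ≤ j
  | 0, _ => by simp
  | j + 1, hj => by
    have hd := dist_iterate_parent hG (c := c) (v := v) (j := j) (by omega)
    have hne : (parent G c)^[j] v ≠ c := by
      rintro h
      rw [h, SimpleGraph.dist_self] at hd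
      omega
    have hadj := (parent_spec hG hne).1
    have := hG.dist_triangle (u := parent G c ((parent G c)^[j] v)) (v := (parent G c)^[j] v)
      (w := v)
    rw [dist_eq_one_iff_adj.mpr hadj] at this
    have := dist_iterate_parent_self_le hG (j := j) (by omega)
    rw [Function.iterate_succ_apply']
    omega

lemma dist_iterate_parent_self (hG : G.Connected) {j : ℕ} (hj : j ≤ G.dist c v) :
    G.dist ((parent G c)^[j] v) v = j := by
  have := hG.dist_triangle (u := c) (v := (parent G c)^[j] v) (w := v)
  have := dist_iterate_parent hG hj
  have := dist_iterate_parent_self_le hG hj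
  omega

lemma eq_parent (hT : G.IsTree) (hadj : G.Adj w v) (hd : G.dist c w + 1 = G.dist c v) :
    w = parent G c v := by
  have hv : v ≠ c := by
    rintro rfl
    rw [SimpleGraph.dist_self] at hd
    omega
  obtain ⟨p, hp, -⟩ := hT.connected.exists_path_of_dist c v
  -- Both `w` and the parent of `v` lie on the `c`-`v` path, next to its end.
  have key : ∀ x, G.Adj x v → G.dist c x + 1 = G.dist c v → x = p.penultimate := by
    intro x hx hdx
    obtain ⟨q, hq, hql⟩ := hT.connected.exists_path_of_dist c x
    have hvq : v ∉ q.support := fun h => by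
      have := dist_le_of_mem_support q h
      omega
    exact hT.isAcyclic.eq_penultimate_of_adj_end hp hx.symm
      (hT.isAcyclic.mem_support_of_ne_mem_support_of_adj_of_isPath hp hq hx.symm hvq)
  exact (key w hadj hd).trans (key _ (parent_spec hT.connected hv).1
    (parent_spec hT.connected hv).2).symm

/-- The neighbour of `c` through which `v` is reached from `c` (`c` itself for `v = c`). -/
noncomputable def leg (G : SimpleGraph V) (c v : V) : V := (parent G c)^[G.dist c v - 1] v

lemma leg_of_dist_eq_one (h : G.dist c v = 1) : leg G c v = v := by
  simp [leg, h]

lemma dist_leg (hG : G.Connected) (hv : v ≠ c) : G.dist c (leg G c v) = 1 := by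
  have := hG.pos_dist_of_ne hv.symm
  have := dist_iterate_parent hG (c := c) (v := v) (j := G.dist c v - 1) (by omega)
  rw [leg]
  omega

lemma leg_iterate_parent (hG : G.Connected) {j : ℕ} (hj : j < G.dist c v) :
    leg G c ((parent G c)^[j] v) = leg G c v := by
  have := dist_iterate_parent hG hj.le
  rw [leg, leg, ← Function.iterate_add_apply]
  congr 1
  omega

lemma leg_eq_of_adj (hT : G.IsTree) (hadj : G.Adj u v) (hu : u ≠ c) (hv : v ≠ c) :
    leg G c u = leg G c v := by
  have step : ∀ {x y}, G.Adj x y → y ≠ c → G.dist c x = G.dist c y + 1 →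
      leg G c x = leg G c y := by
    intro x y hxy hy hd
    have hy1 := hT.connected.pos_dist_of_ne (Ne.symm hy)
    have := leg_iterate_parent hT.connected (c := c) (v := x) (j := 1) (by omega)
    rw [Function.iterate_one, ← eq_parent hT hxy.symm hd.symm] at this
    exact this.symm
  rcases hT.dist_eq_dist_add_one_of_adj c hadj with h | h
  · exact step hadj hv h
  · exact (step hadj.symm hu h).symm

lemma leg_eq_of_walk (hT : G.IsTree) : ∀ {u v : V} (p : G.Walk u v), c ∉ p.support →
    leg G c u = leg G c v
  | _, _, .nil, _ => rfl
  | _, _, .cons hadj p, hc => by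
    rw [Walk.support_cons, List.mem_cons, not_or] at hc
    exact (leg_eq_of_adj hT hadj (Ne.symm hc.1) fun h => hc.2 (h ▸ p.start_mem_support)).trans
      (leg_eq_of_walk hT p hc.2)

lemma dist_eq_add_of_leg_ne (hT : G.IsTree) (hleg : leg G c u ≠ leg G c v) :
    G.dist u v = G.dist c u + G.dist c v := by
  classical
  obtain ⟨p, hp⟩ := hT.connected.exists_walk_length_eq_dist u v
  have hc : c ∈ p.support := by
    by_contra hc
    exact hleg (leg_eq_of_walk hT p hc)
  have hlen := congrArg Walk.length (p.take_spec hc)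
  rw [Walk.length_append] at hlen
  have h1 := dist_le (p.takeUntil c hc)
  have h2 := dist_le (p.dropUntil c hc)
  have := hT.connected.dist_triangle (u := u) (v := c) (w := v)
  rw [SimpleGraph.dist_comm (u := u) (v := c)] at h1 this
  omega

end RootedTree

section Legs

variable {V : Type*} {G : SimpleGraph V} {c u v : V}

-- Two vertices of one leg at equal depth would meet at a vertex of degree at least three.
lemma eq_of_leg_eq_of_dist_eq [Finite V] (hG : G.Connected) (hdeg : ∀ w, w ≠ c → ndeg G w < 3)
    (hu : u ≠ c) (hleg : leg G c u = leg G c v) (hd : G.dist c u = G.dist c v) : u = v := by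
  obtain ⟨k, hk⟩ : ∃ k, G.dist c u = k := ⟨_, rfl⟩
  induction k generalizing u v with
  | zero => exact absurd (hG.dist_eq_zero_iff.mp hk).symm hu
  | succ k ih =>
    have hv : v ≠ c := by
      rintro rfl
      rw [SimpleGraph.dist_self] at hd
      omega
    rcases Nat.eq_zero_or_pos k with rfl | hk0
    · rwa [leg_of_dist_eq_one hk, leg_of_dist_eq_one (hd ▸ hk)] at hleg
    have ⟨hau, hdu⟩ := parent_spec hG hu
    have ⟨hav, hdv⟩ := parent_spec hG hv
    have hpu : parent G c u ≠ c := fun h => by rw [h, SimpleGraph.dist_self] at hdu; omega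
    have hpp : parent G c u = parent G c v := by
      refine ih hpu ?_ (by omega) (by omega)
      have h1 := leg_iterate_parent hG (c := c) (v := u) (j := 1) (by omega)
      have h2 := leg_iterate_parent hG (c := c) (v := v) (j := 1) (by omega)
      simp only [Function.iterate_one] at h1 h2
      rw [h1, h2, hleg]
    by_contra huv
    have ⟨haw, hdw⟩ := parent_spec hG hpu
    refine (hdeg _ hpu).not_ge (three_le_ndeg hau (hpp ▸ hav) haw.symm huv ?_ ?_)
    · intro h; have := congrArg (G.dist c) h; omega
    · intro h; have := congrArg (G.dist c) h; omega

lemma eq_iterate_parent_of_leg_eq [Finite V] (hG : G.Connected)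
    (hdeg : ∀ w, w ≠ c → ndeg G w < 3) (hal : u = c ∨ leg G c u = leg G c v)
    (hle : G.dist c u ≤ G.dist c v) : u = (parent G c)^[G.dist c v - G.dist c u] v := by
  by_cases hu : u = c
  · subst hu
    simpa using (iterate_parent_dist hG).symm
  have hleg := hal.resolve_left hu
  have hu1 := hG.pos_dist_of_ne (Ne.symm hu)
  have hd := dist_iterate_parent hG (c := c) (v := v) (j := G.dist c v - G.dist c u) (by omega)
  refine eq_of_leg_eq_of_dist_eq hG hdeg hu ?_ (by omega)
  rw [hleg, leg_iterate_parent hG (by omega)]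

lemma eq_iterate_parent_of_dist_eq [Finite V] (hG : G.Connected)
    (hdeg : ∀ w, w ≠ c → ndeg G w < 3) {D : ℕ} (hD : 1 ≤ D) (hd : G.dist u v = D)
    (hal : ¬(u ≠ c ∧ v ≠ c ∧ leg G c u ≠ leg G c v)) (hle : G.dist c u ≤ G.dist c v) :
    u = (parent G c)^[D] v ∧ v ≠ c ∧ D ≤ G.dist c v := by
  have hv : v ≠ c := by
    rintro rfl
    rw [SimpleGraph.dist_self, Nat.le_zero, hG.dist_eq_zero_iff] at hle
    rw [← hle, SimpleGraph.dist_self] at hd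
    omega
  have hu := eq_iterate_parent_of_leg_eq hG hdeg (by tauto) hle
  have := dist_iterate_parent_self hG (c := c) (v := v) (j := G.dist c v - G.dist c u) (by omega)
  rw [← hu, hd] at this
  exact ⟨this ▸ hu, hv, by omega⟩

variable [Fintype V] [DecidableEq V]

noncomputable def legFinset (G : SimpleGraph V) (c z : V) : Finset V :=
  {v | v ≠ c ∧ leg G c v = z}

noncomputable def legLength (G : SimpleGraph V) (c z : V) : ℕ := (legFinset G c z).sup (G.dist c)

lemma mem_legFinset {z : V} : v ∈ legFinset G c z ↔ v ≠ c ∧ leg G c v = z := by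
  simp [legFinset]

lemma dist_le_legLength {z : V} (hv : v ∈ legFinset G c z) : G.dist c v ≤ legLength G c z :=
  le_sup hv

lemma one_le_legLength {z : V} (hz : G.Adj c z) : 1 ≤ legLength G c z := by
  have h1 : G.dist c z = 1 := dist_eq_one_iff_adj.mpr hz
  exact h1 ▸ dist_le_legLength (mem_legFinset.mpr ⟨hz.ne', leg_of_dist_eq_one h1⟩)

-- The ancestors of a deepest vertex of the leg provide a vertex at each depth.
lemma legLength_le_card (hG : G.Connected) (z : V) :
    legLength G c z ≤ #(legFinset G c z) := by
  rcases (legFinset G c z).eq_empty_or_nonempty with h | h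
  · simp [legLength, h]
  obtain ⟨w, hw, hmax⟩ := exists_mem_eq_sup _ h (G.dist c)
  rw [legLength, hmax]
  rw [mem_legFinset] at hw
  have hdepth : ∀ k ∈ Icc 1 (G.dist c w), G.dist c ((parent G c)^[G.dist c w - k] w) = k :=
    fun k hk => by
      have := dist_iterate_parent hG (c := c) (v := w) (j := G.dist c w - k) (by omega)
      rw [mem_Icc] at hk
      omega
  calc G.dist c w = #(Icc 1 (G.dist c w)) := by simp
    _ ≤ #(legFinset G c z) := by
      refine card_le_card_of_injOn (fun k => (parent G c)^[G.dist c w - k] w) ?_ ?_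
      · intro k hk
        have := hdepth k hk
        rw [mem_coe, mem_Icc] at hk
        refine mem_legFinset.mpr ⟨fun h => ?_, ?_⟩
        · rw [show (parent G c)^[G.dist c w - k] w = c from h, SimpleGraph.dist_self] at this
          omega
        · rw [leg_iterate_parent hG (by omega), hw.2]
      · intro k hk k' hk' h
        rw [← hdepth k hk, ← hdepth k' hk']
        exact congrArg (G.dist c) h

lemma card_aligned_le (hG : G.Connected) (hdeg : ∀ w, w ≠ c → ndeg G w < 3) {D : ℕ}
    (hD : 1 ≤ D) :
    #{p : V × V | G.dist p.1 p.2 = D ∧ ¬(p.1 ≠ c ∧ p.2 ≠ c ∧ leg G c p.1 ≠ leg G c p.2)} ≤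
      2 * #{v | v ≠ c ∧ D ≤ G.dist c v} := by
  have key : ∀ {u v : V}, G.dist u v = D → ¬(u ≠ c ∧ v ≠ c ∧ leg G c u ≠ leg G c v) →
      G.dist c u ≤ G.dist c v → u = (parent G c)^[D] v ∧ v ≠ c ∧ D ≤ G.dist c v :=
    eq_iterate_parent_of_dist_eq hG hdeg hD
  have key' : ∀ {u v : V}, G.dist u v = D → ¬(u ≠ c ∧ v ≠ c ∧ leg G c u ≠ leg G c v) →
      G.dist c v ≤ G.dist c u → v = (parent G c)^[D] u ∧ u ≠ c ∧ D ≤ G.dist c u :=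
    fun hd hal => key (SimpleGraph.dist_comm.trans hd) (by tauto)
  -- Record the deeper endpoint, and whether it comes second.
  calc _ ≤ #(({v | v ≠ c ∧ D ≤ G.dist c v} : Finset V) ×ˢ (univ : Finset Bool)) := by
        refine card_le_card_of_injOn
          (fun p => if G.dist c p.1 < G.dist c p.2 then (p.2, true) else (p.1, false))
          (fun p hp => ?_) (fun p hp q hq h => ?_)
        · simp only [coe_filter, mem_univ, true_and, Set.mem_ofPred_eq] at hp
          dsimp only
          split_ifs with hlt
          · simpa using (key hp.1 hp.2 hlt.le).2
          · simpa using (key' hp.1 hp.2 (not_lt.mp hlt)).2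
        · simp only [coe_filter, mem_univ, true_and, Set.mem_ofPred_eq] at hp hq
          dsimp only at h
          split_ifs at h with hp' hq' hq' <;> simp only [Prod.mk.injEq] at h
          · rw [Prod.ext_iff, (key hp.1 hp.2 hp'.le).1, (key hq.1 hq.2 hq'.le).1, h.1]
            exact ⟨rfl, rfl⟩
          · simp at h
          · simp at h
          · rw [Prod.ext_iff, (key' hp.1 hp.2 (not_lt.mp hp')).1,
              (key' hq.1 hq.2 (not_lt.mp hq')).1, h.1]
            exact ⟨rfl, rfl⟩
    _ = 2 * #{v | v ≠ c ∧ D ≤ G.dist c v} := by simp [mul_comm]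

variable [DecidableRel G.Adj]

lemma card_eq_sum_card_filter_leg_eq (hG : G.Connected) (s : Finset V) (hs : ∀ v ∈ s, v ≠ c) :
    #s = ∑ z ∈ G.neighborFinset c, #{v ∈ s | leg G c v = z} :=
  card_eq_sum_card_fiberwise fun v hv => by
    rw [mem_coe, mem_neighborFinset, ← dist_eq_one_iff_adj]
    exact dist_leg hG (hs v hv)

lemma sum_legLength_le (hG : G.Connected) :
    ∑ z ∈ G.neighborFinset c, legLength G c z ≤ Fintype.card V - 1 := by
  calc ∑ z ∈ G.neighborFinset c, legLength G c z
      ≤ ∑ z ∈ G.neighborFinset c, #{v ∈ univ.erase c | leg G c v = z} := by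
        gcongr with z
        refine (legLength_le_card hG z).trans_eq (congrArg card ?_)
        ext v
        simp [mem_legFinset]
    _ = #(univ.erase c) :=
        (card_eq_sum_card_filter_leg_eq hG _ fun v hv => (mem_erase.mp hv).1).symm
    _ = Fintype.card V - 1 := by simp

lemma card_deep_le (hG : G.Connected) (hdeg : ∀ w, w ≠ c → ndeg G w < 3) (D : ℕ) :
    #{v | v ≠ c ∧ D ≤ G.dist c v} ≤
      ∑ z ∈ G.neighborFinset c, alignedPairs D (legLength G c z) := by
  rw [card_eq_sum_card_filter_leg_eq hG _ fun v hv => (mem_filter.mp hv).2.1]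
  gcongr with z
  calc #{v ∈ {v | v ≠ c ∧ D ≤ G.dist c v} | leg G c v = z}
      ≤ #(Icc D (legLength G c z)) := by
        refine card_le_card_of_injOn (G.dist c) (fun v hv => ?_) (fun v hv w hw h => ?_)
        · simp only [coe_filter, mem_filter, mem_univ, true_and, Set.mem_ofPred_eq] at hv
          exact mem_Icc.mpr ⟨hv.1.2, dist_le_legLength (mem_legFinset.mpr ⟨hv.1.1, hv.2⟩)⟩
        · simp only [coe_filter, mem_filter, mem_univ, true_and, Set.mem_ofPred_eq] at hv hw
          exact eq_of_leg_eq_of_dist_eq hG hdeg hv.1.1 (hv.2.trans hw.2.symm) h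
    _ = alignedPairs D (legLength G c z) := by simp [alignedPairs]

lemma card_cross_le (hT : G.IsTree) (hdeg : ∀ w, w ≠ c → ndeg G w < 3) {D : ℕ} (hD : 1 ≤ D) :
    #{p : V × V | G.dist p.1 p.2 = D ∧ p.1 ≠ c ∧ p.2 ≠ c ∧ leg G c p.1 ≠ leg G c p.2} ≤
      ∑ x ∈ (G.neighborFinset c).offDiag,
        crossPairs D (legLength G c x.1) (legLength G c x.2) := by
  have hG := hT.connected
  rw [card_eq_sum_card_fiberwise (f := fun p => (leg G c p.1, leg G c p.2))
    (t := (G.neighborFinset c).offDiag) fun p hp => ?_]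
  · gcongr with x
    rw [← card_filter_add_eq_crossPairs hD]
    refine card_le_card_of_injOn (fun p => (G.dist c p.1, G.dist c p.2)) (fun p hp => ?_)
      (fun p hp q hq h => ?_)
    · simp only [coe_filter, mem_filter, mem_univ, true_and, Set.mem_ofPred_eq, Prod.ext_iff]
        at hp
      obtain ⟨⟨hd, h1, h2, h12⟩, hx1, hx2⟩ := hp
      rw [dist_eq_add_of_leg_ne hT h12] at hd
      simp only [mem_coe, mem_filter, mem_product, mem_Icc]
      exact ⟨⟨⟨hG.pos_dist_of_ne (Ne.symm h1), dist_le_legLength (mem_legFinset.mpr ⟨h1, hx1⟩)⟩,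
        ⟨hG.pos_dist_of_ne (Ne.symm h2), dist_le_legLength (mem_legFinset.mpr ⟨h2, hx2⟩)⟩⟩, hd⟩
    · simp only [coe_filter, mem_filter, mem_univ, true_and, Set.mem_ofPred_eq, Prod.ext_iff]
        at hp hq h
      exact Prod.ext (eq_of_leg_eq_of_dist_eq hG hdeg hp.1.2.1 (hp.2.1.trans hq.2.1.symm) h.1)
        (eq_of_leg_eq_of_dist_eq hG hdeg hp.1.2.2.1 (hp.2.2.trans hq.2.2.symm) h.2)
  · simp only [coe_filter, mem_univ, true_and, Set.mem_ofPred_eq] at hp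
    simp only [mem_coe, mem_offDiag, mem_neighborFinset, ← dist_eq_one_iff_adj]
    exact ⟨dist_leg hG hp.2.1, dist_leg hG hp.2.2.1, hp.2.2.2⟩

noncomputable def legLengths (G : SimpleGraph V) [DecidableRel G.Adj] (c : V) : List ℕ :=
  ((G.neighborFinset c).val.map (legLength G c)).sort (· ≥ ·)

lemma coe_legLengths :
    (legLengths G c : Multiset ℕ) = (G.neighborFinset c).val.map (legLength G c) :=
  Multiset.sort_eq _ _

lemma pairwise_legLengths : (legLengths G c).Pairwise (· ≥ ·) :=
  Multiset.pairwise_sort _ _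

lemma one_le_of_mem_legLengths {x : ℕ} (hx : x ∈ legLengths G c) : 1 ≤ x := by
  rw [← Multiset.mem_coe, coe_legLengths, Multiset.mem_map] at hx
  obtain ⟨z, hz, rfl⟩ := hx
  exact one_le_legLength ((mem_neighborFinset _ _ _).mp hz)

lemma sum_legLengths_le (hG : G.Connected) : (legLengths G c).sum ≤ Fintype.card V - 1 := by
  rw [← Multiset.sum_coe, coe_legLengths, ← sum_eq_multiset_sum]
  exact sum_legLength_le hG

lemma card_dist_eq_le_pairCount (hT : G.IsTree) (hdeg : ∀ w, w ≠ c → ndeg G w < 3) {D : ℕ}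
    (hD : 1 ≤ D) : #{p : V × V | G.dist p.1 p.2 = D} ≤ pairCount D (legLengths G c) := by
  have hW : ∑ z ∈ G.neighborFinset c, alignedPairs D (legLength G c z) =
      ((legLengths G c).map (alignedPairs D)).sum := by
    rw [sum_eq_multiset_sum, ← Function.comp_def, ← Multiset.map_map, ← coe_legLengths,
      Multiset.map_coe, Multiset.sum_coe]
  rw [pairCount, ← hW, ← sum_offDiag_eq_crossSum D _ _ coe_legLengths,
    ← card_filter_add_card_filter_not
      (fun p : V × V => p.1 ≠ c ∧ p.2 ≠ c ∧ leg G c p.1 ≠ leg G c p.2), filter_filter,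
    filter_filter]
  have := card_aligned_le hT.connected hdeg hD (c := c)
  have := card_deep_le hT.connected hdeg D (c := c)
  have := card_cross_le hT hdeg hD (c := c)
  omega

lemma nonempty_iso_of_legLengths_eq (hT : G.IsTree) (h : legLengths G c = [1, 1, 1, 1]) :
    Nonempty (G ≃g completeBipartiteGraph (Fin 1) (Fin 4)) := by
  have hl := (coe_legLengths (G := G) (c := c)).symm
  rw [h] at hl
  have hone : ∀ z ∈ G.neighborFinset c, legLength G c z = 1 := fun z hz => by
    have := Multiset.mem_map_of_mem (legLength G c) hz
    rw [hl] at this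
    simpa using this
  have hadj : ∀ v, v ≠ c → G.Adj c v := fun v hv => by
    have hz : leg G c v ∈ G.neighborFinset c := by
      rw [mem_neighborFinset, ← dist_eq_one_iff_adj]
      exact dist_leg hT.connected hv
    have := dist_le_legLength (G := G) (mem_legFinset.mpr ⟨hv, rfl⟩)
    have := hT.connected.pos_dist_of_ne (Ne.symm hv)
    rw [hone _ hz] at *
    exact dist_eq_one_iff_adj.mp (by omega)
  have hcard : Fintype.card V = 4 + 1 := by
    have h4 : #(G.neighborFinset c) = 4 := by
      simpa using congrArg Multiset.card hl
    have : G.neighborFinset c = univ.erase c := by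
      ext v
      simpa using ⟨fun h => h.ne', hadj v⟩
    rw [this, card_erase_of_mem (mem_univ c), card_univ] at h4
    have := Fintype.card_pos_iff.mpr ⟨c⟩
    omega
  obtain ⟨e⟩ := nonempty_starGraph_iso c hcard
  exact ⟨(Iso.refl.trans (by rw [eq_starGraph_of_forall_adj hT hadj] : G ≃g starGraph c)).trans e⟩

end Legs

end Spider

open Spider Finset in
/-- A spider with `n ≥ 2ℓ+1` vertices contains at most `ℓ+3` paths with exactly `n-ℓ`
vertices, except for the spider `S_{1,1,1,1} = K_{1,4}` when `ℓ = 2`.  (In a tree,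
paths with `m` vertices correspond bijectively to unordered pairs of vertices at
distance `m-1`.) -/
theorem spider_long_paths (n ℓ : ℕ) (hℓ : 1 ≤ ℓ) (hn : 2 * ℓ + 1 ≤ n)
    (G : SimpleGraph (Fin n)) (htree : G.IsTree)
    (hspider : ∀ u v : Fin n, 3 ≤ ndeg G u → 3 ≤ ndeg G v → u = v)
    (hexc : ¬ (ℓ = 2 ∧ Nonempty (G ≃g completeBipartiteGraph (Fin 1) (Fin 4)))) :
    Nat.card {p : Fin n × Fin n //
      p.1 < p.2 ∧ G.edist p.1 p.2 = ((n - ℓ - 1 : ℕ) : ℕ∞)} ≤ ℓ + 3 := by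
  classical
  have : Nonempty (Fin n) := ⟨⟨0, by omega⟩⟩
  obtain ⟨c, hdeg⟩ := exists_forall_ndeg_lt hspider
  rw [Nat.card_eq_fintype_card, Fintype.card_subtype]
  simp_rw [← (htree.connected _ _).coe_dist_eq_edist, Nat.cast_inj]
  have hdouble := two_mul_card_filter_lt_le (fun u v => G.dist u v = n - ℓ - 1)
    fun u v h => SimpleGraph.dist_comm.trans h
  have hcount := card_dist_eq_le_pairCount htree hdeg (c := c) (D := n - ℓ - 1) (by omega)
  have hsum := sum_legLengths_le htree.connected (G := G) (c := c)
  rw [Fintype.card_fin] at hsum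
  have hbound := pairCount_le (D := n - ℓ - 1) (l := legLengths G c) hℓ (by omega)
    (fun _ => one_le_of_mem_legLengths) pairwise_legLengths (by omega)
    fun h => hexc ⟨h.1, nonempty_iso_of_legLengths_eq htree h.2⟩
  omega
end

section
/- Let ℓ ≥ 3 and n = 2ℓ+1. Suppose F is an acyclic n-vertex simple graph, H is an n-vertex simple graph containing a cycle, and F and H have the same (n−ℓ)-deck. Then F has a vertex of degree at least 3, and H has a vertex of degree at least 3. -/
open SimpleGraph

/-!
Every card of `F` is acyclic, hence so is every card of `H`; so a cycle of `H` has more than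
`k = ℓ + 1` vertices, and its arcs of `k` consecutive vertices are more than `k` distinct connected
cards. If `F` had maximum degree at most two, any two `k`-sets would meet (as `2k > n`), so all
connected cards of `F` would lie in one component, which is a path on at most `n` vertices; being
runs of `k` consecutive vertices of that path, they number at most `n - k + 1 = ℓ + 1`. The decks
agree, so the numbers of connected cards agree: a contradiction. Finally, a vertex of degree three
in `F` fits into a card together with three of its neighbours (`k ≥ 4`), and the matching card of
`H` exhibits a vertex of degree three in `H`.
-/

namespace SimpleGraph

variable {V W : Type*} {G : SimpleGraph V}

lemma three_le_ndeg_iff [Finite V] {v : V} :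
    3 ≤ ndeg G v ↔ ∃ a b c, G.Adj v a ∧ G.Adj v b ∧ G.Adj v c ∧ a ≠ b ∧ a ≠ c ∧ b ≠ c := by
  have := Fintype.ofFinite V
  classical
  rw [ndeg, Nat.card_eq_fintype_card]
  change 2 < _ ↔ _
  rw [Fintype.two_lt_card_iff]
  constructor
  · rintro ⟨a, b, c, hab, hac, hbc⟩
    exact ⟨a, b, c, a.2, b.2, c.2, Subtype.coe_ne_coe.2 hab, Subtype.coe_ne_coe.2 hac,
      Subtype.coe_ne_coe.2 hbc⟩
  · rintro ⟨a, b, c, ha, hb, hc, hab, hac, hbc⟩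
    exact ⟨⟨a, ha⟩, ⟨b, hb⟩, ⟨c, hc⟩, by simpa, by simpa, by simpa⟩

lemma eq_or_eq_or_eq_of_ndeg_le_two [Finite V] {v a b c : V} (h : ndeg G v ≤ 2)
    (ha : G.Adj v a) (hb : G.Adj v b) (hc : G.Adj v c) : a = b ∨ a = c ∨ b = c := by
  by_contra! hne
  have := three_le_ndeg_iff.2 ⟨a, b, c, ha, hb, hc, hne⟩
  omega

lemma ndeg_le_of_embedding [Finite W] {G' : SimpleGraph W} (f : G ↪g G') (v : V) :
    ndeg G v ≤ ndeg G' (f v) :=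
  Nat.card_le_card_of_injective (fun w => ⟨f w, f.map_adj_iff.2 w.2⟩)
    fun _ _ h => Subtype.ext (f.injective (congrArg Subtype.val h))

def connectedCards (G : SimpleGraph V) (k : ℕ) : Set (Finset V) :=
  {s | s.card = k ∧ (G.induce (s : Set V)).Connected}

lemma Reachable.mem_of_forall_adj_mem {s : Set V} (hs : ∀ ⦃y z⦄, G.Adj y z → z ∈ s → y ∈ s)
    {y z : V} (h : G.Reachable y z) (hz : z ∈ s) : y ∈ s := by
  obtain ⟨w⟩ := h
  induction w with
  | nil => exact hz
  | cons hadj _ ih => exact hs hadj (ih hz)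

lemma Connected.reachable_of_induce {s : Set V} (hs : (G.induce s).Connected) {y z : V}
    (hy : y ∈ s) (hz : z ∈ s) : G.Reachable y z :=
  (hs.preconnected ⟨y, hy⟩ ⟨z, hz⟩).map (Embedding.induce s).toHom

lemma connected_induce_image_Iio {f : ℕ → V} {k : ℕ} (hk : 0 < k)
    (hf : ∀ t, t + 1 < k → G.Adj (f t) (f (t + 1))) : (G.induce (f '' Set.Iio k)).Connected := by
  have hmem : ∀ t < k, f t ∈ f '' Set.Iio k := fun t ht => ⟨t, ht, rfl⟩
  have hreach : ∀ t (ht : t < k),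
      (G.induce (f '' Set.Iio k)).Reachable ⟨f 0, hmem 0 hk⟩ ⟨f t, hmem t ht⟩ := by
    intro t
    induction t with
    | zero => exact fun _ => .rfl
    | succ t ih => exact fun ht => (ih (by omega)).trans (Adj.reachable (by simpa using hf t ht))
  rw [connected_iff_exists_forall_reachable]
  exact ⟨_, by rintro ⟨_, t, ht, rfl⟩; exact hreach t ht⟩

namespace Walk

lemma exists_isPath_mem_support_forall_length_le [Fintype V] (x : V) :
    ∃ (a b : V) (p : G.Walk a b), p.IsPath ∧ x ∈ p.support ∧
      ∀ (a' b' : V) (q : G.Walk a' b'), q.IsPath → x ∈ q.support → q.length ≤ p.length := by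
  classical
  let P (N : ℕ) : Prop := ∃ (a b : V) (p : G.Walk a b), p.IsPath ∧ x ∈ p.support ∧ p.length = N
  obtain ⟨a, b, p, hp, hx, hlen⟩ : P (Nat.findGreatest P (Fintype.card V)) :=
    Nat.findGreatest_spec (Nat.zero_le _) ⟨x, x, .nil, .nil, by simp, rfl⟩
  exact ⟨a, b, p, hp, hx, fun a' b' q hq hxq =>
    hlen ▸ Nat.le_findGreatest hq.length_lt.le ⟨a', b', q, hq, hxq, rfl⟩⟩

/-- A longest path through `x` cannot be left along an edge: at an end it could be extended, and
an inner vertex already has its two neighbours on the path. -/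
lemma exists_isPath_forall_reachable_mem_support [Fintype V] (hdeg : ∀ v, ndeg G v ≤ 2)
    (x : V) : ∃ (a b : V) (p : G.Walk a b), p.IsPath ∧ ∀ y, G.Reachable x y → y ∈ p.support := by
  obtain ⟨a, b, p, hp, hx, hmax⟩ := exists_isPath_mem_support_forall_length_le (G := G) x
  refine ⟨a, b, p, hp, fun y hy => hy.symm.mem_of_forall_adj_mem (s := {w | w ∈ p.support})
    (fun y z hyz hz => ?_) hx⟩
  by_contra hy
  obtain ⟨i, rfl, hi⟩ := mem_support_iff_exists_getVert.1 hz
  rcases Nat.eq_zero_or_pos i with rfl | hi0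
  · rw [getVert_zero] at hyz
    have := hmax _ _ (cons hyz p) (hp.cons hy) (by simp [hx])
    simp at this
  rcases hi.lt_or_eq with hiL | rfl
  · have hprev := p.adj_getVert_succ (i := i - 1) (by omega)
    rw [Nat.sub_add_cancel hi0] at hprev
    have hinj := hp.getVert_injOn (x₁ := i - 1) (x₂ := i + 1) (by grind) (by grind)
    rcases eq_or_eq_or_eq_of_ndeg_le_two (hdeg _) hyz.symm hprev.symm (p.adj_getVert_succ hiL)
      with h | h | h
    · exact hy (h ▸ p.getVert_mem_support _)
    · exact hy (h ▸ p.getVert_mem_support _)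
    · have := hinj h; omega
  · rw [getVert_length] at hyz
    have := hmax _ _ (cons hyz p.reverse) (hp.reverse.cons (by simpa using hy)) (by simp [hx])
    simp at this

end Walk

lemma IsAcyclic.support_subset_of_connected_induce (hG : G.IsAcyclic)
    {a b : V} {p : G.Walk a b} (hp : p.IsPath) {s : Set V} (hs : (G.induce s).Connected)
    (ha : a ∈ s) (hb : b ∈ s) : ∀ w ∈ p.support, w ∈ s := by
  classical
  obtain ⟨q⟩ := hs.preconnected ⟨a, ha⟩ ⟨b, hb⟩
  have hpq : p = (q.map (Embedding.induce s).toHom).bypass :=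
    congrArg Subtype.val ((hG.subsingleton_path a b).elim ⟨p, hp⟩ ⟨_, Walk.bypass_isPath _⟩)
  intro w hw
  rw [hpq] at hw
  obtain ⟨w', -, rfl⟩ :=
    List.mem_map.1 (Walk.support_map _ q ▸ Walk.support_bypass_subset_support _ hw)
  exact w'.2

lemma IsAcyclic.getVert_mem_of_connected_induce (hG : G.IsAcyclic)
    {a b : V} {p : G.Walk a b} (hp : p.IsPath) {s : Set V} (hs : (G.induce s).Connected)
    {i j t : ℕ} (hi : p.getVert i ∈ s) (hj : p.getVert j ∈ s) (hit : i ≤ t) (htj : t ≤ j) :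
    p.getVert t ∈ s := by
  have hseg : ((p.drop i).take (j - i)).IsPath := (hp.drop i).take _
  refine hG.support_subset_of_connected_induce hseg hs hi
    (by simpa [Nat.add_sub_cancel' (hit.trans htj)]) _ ?_
  simpa [Nat.add_sub_cancel' hit, min_eq_right (Nat.sub_le_sub_right htj i)] using
    ((p.drop i).take (j - i)).getVert_mem_support (t - i)

lemma IsAcyclic.exists_eq_image_Ico [DecidableEq V] (hG : G.IsAcyclic)
    {a b : V} {p : G.Walk a b} (hp : p.IsPath) {s : Finset V}
    (hs : (G.induce (s : Set V)).Connected) (hsp : ∀ y ∈ s, y ∈ p.support) :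
    ∃ i, i + s.card ≤ p.length + 1 ∧ s = (Finset.Ico i (i + s.card)).image p.getVert := by
  set I := (Finset.range (p.length + 1)).filter (p.getVert · ∈ s)
  have hsI : s = I.image p.getVert := by
    ext y
    simp only [I, Finset.mem_image, Finset.mem_filter, Finset.mem_range]
    refine ⟨fun hy => ?_, fun ⟨i, ⟨_, hi⟩, hiy⟩ => hiy ▸ hi⟩
    obtain ⟨i, rfl, hi⟩ := Walk.mem_support_iff_exists_getVert.1 (hsp y hy)
    exact ⟨i, ⟨by omega, hy⟩, rfl⟩
  have hmem {i} (hi : i ∈ I) : i ≤ p.length ∧ p.getVert i ∈ s := by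
    simpa [I, Nat.lt_succ_iff] using hi
  have hcard : I.card = s.card := by
    rw [hsI, Finset.card_image_of_injOn]
    exact hp.getVert_injOn.mono fun i hi => (hmem hi).1
  have hne : I.Nonempty := by
    obtain ⟨⟨y, hy⟩⟩ := hs.nonempty
    rw [hsI] at hy
    obtain ⟨i, hi, -⟩ := Finset.mem_image.1 hy
    exact ⟨i, hi⟩
  have hmin := hmem (I.min'_mem hne)
  have hmax := hmem (I.max'_mem hne)
  have hIco : I = Finset.Ico (I.min' hne) (I.max' hne + 1) := by
    ext t
    simp only [Finset.mem_Ico, Nat.lt_succ_iff]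
    refine ⟨fun ht => ⟨I.min'_le t ht, I.le_max' t ht⟩, fun ⟨h₁, h₂⟩ => ?_⟩
    simp only [I, Finset.mem_filter, Finset.mem_range]
    exact ⟨by omega, hG.getVert_mem_of_connected_induce hp hs hmin.2 hmax.2 h₁ h₂⟩
  have hle := I.min'_le _ (I.max'_mem hne)
  rw [hIco, Nat.card_Ico] at hcard
  refine ⟨I.min' hne, by omega, ?_⟩
  rwa [← hcard, Nat.add_sub_cancel' (by omega), ← hIco]

lemma ncard_connectedCards_le [Fintype V] (hG : G.IsAcyclic)
    (hdeg : ∀ v, ndeg G v ≤ 2) {k : ℕ} (hk : Fintype.card V < 2 * k) :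
    (connectedCards G k).ncard ≤ Fintype.card V + 1 - k := by
  classical
  rcases (connectedCards G k).eq_empty_or_nonempty with h | ⟨s₀, hs₀, hs₀conn⟩
  · simp [h]
  obtain ⟨⟨x, hx⟩⟩ := hs₀conn.nonempty
  obtain ⟨a, b, p, hp, hreach⟩ := Walk.exists_isPath_forall_reachable_mem_support hdeg x
  have hsub : ∀ s ∈ connectedCards G k, ∀ y ∈ s, y ∈ p.support := by
    rintro s ⟨hs, hconn⟩ y hy
    obtain ⟨z, hz⟩ := Finset.inter_nonempty_of_card_lt_card_add_card
      (Finset.subset_univ s) (Finset.subset_univ s₀)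
      (by rw [Finset.card_univ, hs, hs₀]; omega)
    obtain ⟨hzs, hz₀⟩ := Finset.mem_inter.1 hz
    exact hreach y ((hs₀conn.reachable_of_induce hx hz₀).trans (hconn.reachable_of_induce hzs hy))
  calc (connectedCards G k).ncard
      ≤ ((Finset.range (p.length + 2 - k)).image
          fun i => (Finset.Ico i (i + k)).image p.getVert : Set (Finset V)).ncard := by
        refine Set.ncard_le_ncard (fun s hs => ?_) (Set.toFinite _)
        obtain ⟨i, hi, hsi⟩ := hG.exists_eq_image_Ico hp hs.2 (hsub s hs)
        rw [hs.1] at hi hsi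
        simp only [Finset.coe_image, Finset.coe_range]
        exact ⟨i, by simp only [Set.mem_Iio]; omega, hsi.symm⟩
    _ ≤ p.length + 2 - k := by
        rw [Set.ncard_coe_finset]
        exact Finset.card_image_le.trans (Finset.card_range _).le
    _ ≤ Fintype.card V + 1 - k := by have := hp.length_lt; omega

namespace Walk

variable {u : V} {c : G.Walk u u}

lemma IsCycle.getVert_mod_inj (hc : c.IsCycle) {a b : ℕ}
    (h : c.getVert (a % c.length) = c.getVert (b % c.length)) : a % c.length = b % c.length := by
  have := hc.three_le_length
  exact hc.getVert_injOn' (Nat.le_sub_one_of_lt (Nat.mod_lt a (by omega)))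
    (Nat.le_sub_one_of_lt (Nat.mod_lt b (by omega))) h

lemma IsCycle.adj_getVert_mod (hc : c.IsCycle) (j : ℕ) :
    G.Adj (c.getVert (j % c.length)) (c.getVert ((j + 1) % c.length)) := by
  have h3 := hc.three_le_length
  have hlt := Nat.mod_lt j (by omega : 0 < c.length)
  have : c.getVert ((j + 1) % c.length) = c.getVert (j % c.length + 1) := by
    rw [Nat.add_mod_eq_ite, Nat.one_mod_eq_one.2 (by omega)]
    split_ifs with h
    · rw [show j % c.length + 1 - c.length = 0 by omega, show j % c.length + 1 = c.length by omega,
        getVert_length, getVert_zero]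
    · rfl
  rw [this]
  exact c.adj_getVert_succ hlt

lemma IsCycle.lt_length_of_isAcyclic_induce [Fintype V] (hc : c.IsCycle) {k : ℕ}
    (hk : k ≤ Fintype.card V) (h : ∀ s : Finset V, s.card = k → (G.induce (s : Set V)).IsAcyclic) :
    k < c.length := by
  classical
  by_contra! hle
  have hcard : c.support.toFinset.card ≤ k := by
    calc c.support.toFinset.card = c.support.tail.toFinset.card := by
          conv_lhs => rw [← cons_tail_support, List.toFinset_cons, Finset.insert_eq_of_mem
            (List.mem_toFinset.2 (c.end_mem_tail_support hc.not_nil))]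
      _ ≤ c.length := by simpa using c.support.tail.toFinset_card_le
      _ ≤ k := hle
  obtain ⟨s, hsub, hs⟩ := Finset.exists_superset_card_eq hcard hk
  have hmem : ∀ w ∈ c.support, w ∈ (s : Set V) := fun w hw => hsub (List.mem_toFinset.2 hw)
  refine h s hs (c.induce _ hmem) ?_
  rw [← isCycle_map_iff_of_injective (f := (Embedding.induce (s : Set V)).toHom)
    Subtype.val_injective, map_induce]
  exact hc

section Arc

variable [DecidableEq V]

def cycleArc (c : G.Walk u u) (i k : ℕ) : Finset V :=
  (Finset.range k).image fun t => c.getVert ((i + t) % c.length)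

lemma card_cycleArc (hc : c.IsCycle) {k : ℕ} (hk : k ≤ c.length) (i : ℕ) :
    (cycleArc c i k).card = k := by
  rw [cycleArc, Finset.card_image_of_injOn, Finset.card_range]
  intro t ht t' ht' h
  simp only [Finset.coe_range, Set.mem_Iio] at ht ht'
  have := Nat.ModEq.add_left_cancel' i (hc.getVert_mod_inj h)
  rwa [Nat.ModEq, Nat.mod_eq_of_lt (by omega), Nat.mod_eq_of_lt (by omega)] at this

lemma connected_induce_cycleArc (hc : c.IsCycle) {k : ℕ} (hk : 0 < k) (i : ℕ) :
    (G.induce (cycleArc c i k : Set V)).Connected := by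
  rw [cycleArc, Finset.coe_image, Finset.coe_range]
  exact connected_induce_image_Iio hk fun t _ => by
    simpa [Nat.add_assoc] using hc.adj_getVert_mod (i + t)

lemma cycleArc_injOn (hc : c.IsCycle) {k : ℕ} (hk0 : 0 < k) (hk : k < c.length) :
    Set.InjOn (cycleArc c · k) (Set.Iio c.length) := by
  set m := c.length
  have hmod : ∀ j < 2 * m, j % m = if j < m then j else j - m := fun j hj => by
    split_ifs with h
    · exact Nat.mod_eq_of_lt h
    · rw [Nat.mod_eq_sub_mod (by omega), Nat.mod_eq_of_lt (by omega)]
  have mem_iff : ∀ i j, c.getVert (j % m) ∈ cycleArc c i k ↔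
      ∃ t < k, (i + t) % m = j % m := fun i j => by
    simp only [cycleArc, Finset.mem_image, Finset.mem_range]
    exact ⟨fun ⟨t, ht, h⟩ => ⟨t, ht, hc.getVert_mod_inj h⟩, fun ⟨t, ht, h⟩ => ⟨t, ht, by rw [h]⟩⟩
  intro i hi j hj (hij : cycleArc c i k = cycleArc c j k)
  simp only [Set.mem_Iio] at hi hj
  obtain ⟨t, ht, hjt⟩ := (mem_iff j i).1 (hij ▸ (mem_iff i i).2 ⟨0, by omega, rfl⟩)
  rw [hmod _ (by omega), hmod _ (by omega)] at hjt
  by_contra hne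
  -- the predecessor of position `i` would lie in the arc starting at `i`
  obtain ⟨t', ht', hit'⟩ := (mem_iff i (i + m - 1)).1 (hij ▸ (mem_iff j (i + m - 1)).2
    ⟨t - 1, by omega, by rw [hmod _ (by omega), hmod _ (by omega)]; split_ifs at hjt ⊢ <;> omega⟩)
  rw [hmod _ (by omega), hmod _ (by omega)] at hit'
  split_ifs at hit' <;> omega

end Arc

lemma IsCycle.length_le_ncard_connectedCards [Finite V] (hc : c.IsCycle) {k : ℕ} (hk0 : 0 < k)
    (hk : k < c.length) : c.length ≤ (connectedCards G k).ncard := by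
  classical
  calc c.length = ((Finset.range c.length).image (cycleArc c · k)).card := by
        rw [Finset.card_image_of_injOn (by simpa using cycleArc_injOn hc hk0 hk), Finset.card_range]
    _ = ((cycleArc c · k) '' Set.Iio c.length).ncard := by
        rw [← Set.ncard_coe_finset, Finset.coe_image, Finset.coe_range]
    _ ≤ (connectedCards G k).ncard := by
        refine Set.ncard_le_ncard ?_ (Set.toFinite _)
        rintro _ ⟨i, -, rfl⟩
        exact ⟨card_cycleArc hc hk.le i, connected_induce_cycleArc hc hk0 i⟩

end Walk

end SimpleGraph

namespace SameDeck

variable {n k : ℕ} {F H : SimpleGraph (Fin n)}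

lemma isAcyclic_induce (hdeck : SameDeck F H k) (hF : F.IsAcyclic) (s : Finset (Fin n))
    (hs : s.card = k) : (H.induce (s : Set (Fin n))).IsAcyclic := by
  obtain ⟨φ, hφ⟩ := hdeck
  obtain ⟨e⟩ := hφ (φ.symm ⟨s, hs⟩)
  rw [Equiv.apply_symm_apply] at e
  exact e.isAcyclic_iff.1 (hF.induce _)

lemma ncard_connectedCards_eq (hdeck : SameDeck F H k) :
    (connectedCards F k).ncard = (connectedCards H k).ncard := by
  obtain ⟨φ, hφ⟩ := hdeck
  refine Set.ncard_congr (fun s hs => (φ ⟨s, hs.1⟩).1)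
    (fun s hs => ⟨(φ _).2, (hφ _).some.connected_iff.1 hs.2⟩)
    (fun s t hs ht h => congrArg Subtype.val (φ.injective (Subtype.ext h))) fun t ht => ?_
  obtain ⟨e⟩ := hφ (φ.symm ⟨t, ht.1⟩)
  rw [Equiv.apply_symm_apply] at e
  exact ⟨_, ⟨(φ.symm _).2, e.connected_iff.2 ht.2⟩, by simp⟩

lemma exists_three_le_ndeg (hdeck : SameDeck F H k) (hk : 4 ≤ k) (hkn : k ≤ n) {v : Fin n}
    (hv : 3 ≤ ndeg F v) : ∃ w, 3 ≤ ndeg H w := by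
  classical
  obtain ⟨φ, hφ⟩ := hdeck
  obtain ⟨a, b, c, ha, hb, hc, hab, hac, hbc⟩ := three_le_ndeg_iff.1 hv
  obtain ⟨s, hsub, hs⟩ := Finset.exists_superset_card_eq
    ((Finset.card_le_four (a := v) (b := a) (c := b) (d := c)).trans hk) (by simpa using hkn)
  have hmem : ∀ x ∈ ({v, a, b, c} : Finset (Fin n)), x ∈ (s : Set (Fin n)) := fun x hx => hsub hx
  obtain ⟨e⟩ := hφ ⟨s, hs⟩
  have hv' : 3 ≤ ndeg (F.induce (s : Set (Fin n))) ⟨v, hmem v (by simp)⟩ :=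
    three_le_ndeg_iff.2 ⟨⟨a, hmem a (by simp)⟩, ⟨b, hmem b (by simp)⟩, ⟨c, hmem c (by simp)⟩,
      ha, hb, hc, by simpa, by simpa, by simpa⟩
  exact ⟨_, hv'.trans <| (ndeg_le_of_embedding e.toEmbedding _).trans <|
    ndeg_le_of_embedding (Embedding.induce _) _⟩

end SameDeck

/-- For `ℓ ≥ 3` and `n = 2ℓ+1`, if `F` is acyclic, `H` contains a cycle, and they have
the same `(n-ℓ)`-deck, then both `F` and `H` have a vertex of degree at least `3`. -/
theorem max_degree_at_least_three (ℓ n : ℕ) (hℓ : 3 ≤ ℓ) (hn : n = 2 * ℓ + 1)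
    (F H : SimpleGraph (Fin n)) (hF : F.IsAcyclic) (hH : ¬ H.IsAcyclic)
    (hdeck : SameDeck F H (n - ℓ)) :
    (∃ v : Fin n, 3 ≤ ndeg F v) ∧ (∃ v : Fin n, 3 ≤ ndeg H v) := by
  rw [show n - ℓ = ℓ + 1 by omega] at hdeck
  obtain ⟨v, hv⟩ : ∃ v, 3 ≤ ndeg F v := by
    by_contra! hdeg
    obtain ⟨u, c, hc⟩ : ∃ u, ∃ c : H.Walk u u, c.IsCycle := by simpa [IsAcyclic] using hH
    have hlong : ℓ + 1 < c.length :=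
      hc.lt_length_of_isAcyclic_induce (by rw [Fintype.card_fin]; omega)
        (hdeck.isAcyclic_induce hF)
    have hH_cards := hc.length_le_ncard_connectedCards (by omega) hlong
    have hF_cards := ncard_connectedCards_le hF (fun v => by have := hdeg v; omega)
      (k := ℓ + 1) (by rw [Fintype.card_fin]; omega)
    rw [hdeck.ncard_connectedCards_eq] at hF_cards
    simp only [Fintype.card_fin] at hF_cards
    omega
  exact ⟨⟨v, hv⟩, hdeck.exists_three_le_ndeg (by omega) (by omega) hv⟩
end
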